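/- Let 0 < α < 1, 0 ≤ s ≤ t ≤ 1, and define g_n(u,s) = n^α ∫₀ˢ (u-r)^{α-1}(⌈nr⌉ - nr - 1/2) dr for u > s. Then there is a constant C depending only on α such that |g_n(u,s)| ≤ C((nu)^{α-1} + (nu - ns)^{α-1}) for all u ∈ (s, 1] with nu, ns ∉ ℕ; consequently ∫ₛᵗ g_n(u,s)(⌈nu⌉ - nu - 1/2) du → 0 as n → ∞. -/

import Mathlib

/-!
Off the integers `⌈x⌉ - x - 1/2 = ψ x := 1/2 - fract x`, and `ψ` has the continuous
right-antiderivative `Ψ x = fract x (1 - fract x) / 2 ∈ [0, 1/8]`. Integrating by parts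
against the nondecreasing kernel `r ↦ (u - r)^(α-1)` on `[0, s]` trades the oscillating factor
for a term of size `1/n`, so `|g_n(u,s)| ≤ (n(u - s))^(α-1) / 8`. The integrand of the second
claim is then dominated by `n^(α-1) (u - s)^(α-1) / 16`, which is integrable because `α > 0`
and `o(1)` because `α < 1`.
-/

open MeasureTheory Filter Set Topology

noncomputable def sawtooth (x : ℝ) : ℝ := 1 / 2 - Int.fract x

noncomputable def sawtoothPrimitive (x : ℝ) : ℝ := Int.fract x * (1 - Int.fract x) / 2

theorem abs_sawtooth_le (x : ℝ) : |sawtooth x| ≤ 1 / 2 := by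
  rw [sawtooth, abs_le]
  constructor <;> linarith [Int.fract_nonneg x, Int.fract_lt_one x]

theorem sawtoothPrimitive_nonneg (x : ℝ) : 0 ≤ sawtoothPrimitive x :=
  div_nonneg (mul_nonneg (Int.fract_nonneg x) (sub_nonneg.2 (Int.fract_lt_one x).le)) zero_le_two

theorem sawtoothPrimitive_le (x : ℝ) : sawtoothPrimitive x ≤ 1 / 8 := by
  rw [sawtoothPrimitive]
  nlinarith [sq_nonneg (Int.fract x - 1 / 2)]

theorem continuous_sawtoothPrimitive : Continuous sawtoothPrimitive :=
  (ContinuousOn.comp_fract'' (f := fun y : ℝ => y * (1 - y) / 2) (by fun_prop)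
    (by norm_num))

theorem hasDerivWithinAt_sawtoothPrimitive (x : ℝ) :
    HasDerivWithinAt sawtoothPrimitive (sawtooth x) (Ici x) x := by
  set k : ℝ := ((⌊x⌋ : ℤ) : ℝ)
  have hfract : ∀ᶠ y in 𝓝[≥] x, sawtoothPrimitive y = (y - k) * (1 - (y - k)) / 2 :=
    (tendsto_pure.1 (tendsto_floor_right_pure_floor x)).mono fun y hy => by
      rw [sawtoothPrimitive, ← Int.self_sub_floor, hy]
  have hpoly : HasDerivAt (fun y => (y - k) * (1 - (y - k)) / 2)
      ((1 * (1 - (x - k)) + (x - k) * -1) / 2) x :=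
    (((hasDerivAt_id' x).sub_const k).mul
      (((hasDerivAt_id' x).sub_const k).const_sub 1)).div_const 2
  have hslope : (1 * (1 - (x - k)) + (x - k) * -1) / 2 = sawtooth x := by
    rw [sawtooth, ← Int.self_sub_floor]; ring
  rw [← hslope]
  exact hpoly.hasDerivWithinAt.congr_of_eventuallyEq hfract
    (hfract.self_of_nhdsWithin self_mem_Ici)

theorem ae_ceil_sub_self_sub_half_eq_sawtooth {c : ℝ} (hc : c ≠ 0) :
    ∀ᵐ r : ℝ, (⌈c * r⌉ : ℝ) - c * r - 1 / 2 = sawtooth (c * r) := by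
  have hnull : volume {r : ℝ | Int.fract (c * r) = 0} = 0 := by
    refine measure_mono_null (fun r hr => ?_)
      ((countable_range fun k : ℤ => (k : ℝ) / c).measure_zero volume)
    refine ⟨⌊c * r⌋, ?_⟩
    rw [div_eq_iff hc]
    linarith [Int.self_sub_floor (c * r), show Int.fract (c * r) = 0 from hr]
  filter_upwards [measure_eq_zero_iff_ae_notMem.1 hnull] with r hr
  rw [sawtooth, Int.ceil_sub_self_eq hr]
  ring

theorem hasDerivWithinAt_sawtoothPrimitive_mul_div {c : ℝ} (hc : 0 < c) (x : ℝ) :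
    HasDerivWithinAt (fun r => sawtoothPrimitive (c * r) / c) (sawtooth (c * x)) (Ici x) x := by
  have hlin : HasDerivWithinAt (fun r => c * r) c (Ici x) x := by
    simpa using ((hasDerivAt_id x).const_mul c).hasDerivWithinAt
  have hmaps : MapsTo (fun r => c * r) (Ici x) (Ici (c * x)) := fun r hr =>
    mul_le_mul_of_nonneg_left hr hc.le
  have := ((hasDerivWithinAt_sawtoothPrimitive (c * x)).comp x hlin hmaps).div_const c
  rwa [mul_div_cancel_right₀ _ hc.ne'] at this

theorem intervalIntegrable_sawtooth_mul (c a b : ℝ) :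
    IntervalIntegrable (fun x => sawtooth (c * x)) volume a b := by
  refine (intervalIntegrable_const (c := (1 / 2 : ℝ))).mono_fun' ?_ ?_
  · exact (measurable_const.sub (measurable_const_mul c).fract).aestronglyMeasurable
  · exact ae_of_all _ fun x => abs_sawtooth_le (c * x)

theorem abs_integral_mul_sawtooth_le {f f' : ℝ → ℝ} {a b c : ℝ} (hab : a ≤ b) (hc : 0 < c)
    (hf : ∀ x ∈ Icc a b, HasDerivAt f (f' x) x) (hf' : IntervalIntegrable f' volume a b)
    (hf'_nonneg : ∀ x ∈ Icc a b, 0 ≤ f' x) (hfa : 0 ≤ f a) :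
    |∫ x in a..b, f x * sawtooth (c * x)| ≤ f b / (8 * c) := by
  set P : ℝ → ℝ := fun r => sawtoothPrimitive (c * r) / c
  set K : ℝ := 1 / (8 * c)
  have hP_nonneg (r : ℝ) : 0 ≤ P r := div_nonneg (sawtoothPrimitive_nonneg _) hc.le
  have hP_le (r : ℝ) : P r ≤ K := by
    simp only [P, K]
    rw [div_le_div_iff₀ hc (by positivity)]
    nlinarith [sawtoothPrimitive_le (c * r)]
  have hP_cont : Continuous P :=
    (continuous_sawtoothPrimitive.comp (continuous_const_mul c)).div_const c
  have hparts := intervalIntegral.integral_mul_deriv_eq_deriv_mul_of_hasDeriv_right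
    (u := f) (v := P) (fun x hx => (hf x (uIcc_of_le hab ▸ hx)).continuousAt.continuousWithinAt)
    hP_cont.continuousOn
    (fun x hx => (hf x (Ioo_subset_Icc_self (by simpa [hab] using hx))).hasDerivWithinAt)
    (fun x _ => (hasDerivWithinAt_sawtoothPrimitive_mul_div hc x).mono Ioi_subset_Ici_self)
    hf' (intervalIntegrable_sawtooth_mul c a b)
  have hFTC : ∫ x in a..b, f' x = f b - f a :=
    intervalIntegral.integral_eq_sub_of_hasDerivAt (fun x hx => hf x (uIcc_of_le hab ▸ hx)) hf'
  have hrem_nonneg : 0 ≤ ∫ x in a..b, f' x * P x :=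
    intervalIntegral.integral_nonneg hab fun x hx => mul_nonneg (hf'_nonneg x hx) (hP_nonneg x)
  have hrem_le : ∫ x in a..b, f' x * P x ≤ f b * K - f a * K := by
    calc ∫ x in a..b, f' x * P x ≤ ∫ x in a..b, f' x * K :=
          intervalIntegral.integral_mono_on hab (hf'.mul_continuousOn hP_cont.continuousOn)
            (hf'.mul_const K) fun x hx => mul_le_mul_of_nonneg_left (hP_le x) (hf'_nonneg x hx)
      _ = f b * K - f a * K := by rw [intervalIntegral.integral_mul_const, hFTC]; ring
  have hfb : 0 ≤ f b := by
    linarith [hFTC, intervalIntegral.integral_nonneg (μ := volume) hab hf'_nonneg]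
  have hb := mul_le_mul_of_nonneg_left (hP_le b) hfb
  have ha := mul_le_mul_of_nonneg_left (hP_le a) hfa
  have hb0 := mul_nonneg hfb (hP_nonneg b)
  have ha0 := mul_nonneg hfa (hP_nonneg a)
  -- `f a` enters with a minus sign both in `- f a * P a` and in the remainder bound,
  -- so the two boundary terms cannot add up.
  rw [hparts, abs_le, show f b / (8 * c) = f b * K by ring]
  constructor <;> linarith

theorem abs_ceil_sub_self_sub_half_le (x : ℝ) : |(⌈x⌉ : ℝ) - x - 1 / 2| ≤ 1 / 2 := by
  rw [abs_le]
  constructor <;> linarith [Int.le_ceil x, Int.ceil_lt_add_one x]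

/-- The paper's `g_n(u, s)`, with a real scale `c` in place of `n`. -/
noncomputable def gn (α c s u : ℝ) : ℝ :=
  c ^ α * ∫ r in (0 : ℝ)..s, (u - r) ^ (α - 1) * ((⌈c * r⌉ : ℝ) - c * r - 1 / 2)

theorem abs_gn_le {α c s u : ℝ} (hα : α ≤ 1) (hc : 0 < c) (hs : 0 ≤ s) (hsu : s < u) :
    |gn α c s u| ≤ (c * (u - s)) ^ (α - 1) / 8 := by
  have hpos : ∀ r ∈ Icc 0 s, 0 < u - r := fun r hr => by linarith [hr.2]
  have hkernel : ∀ r ∈ Icc 0 s, HasDerivAt (fun r => (u - r) ^ (α - 1))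
      ((1 - α) * (u - r) ^ (α - 2)) r := fun r hr => by
    convert ((hasDerivAt_id' r).const_sub u).rpow_const (p := α - 1) (Or.inl (hpos r hr).ne')
      using 1
    rw [show α - 1 - 1 = α - 2 by ring]; ring
  have hkernel' : IntervalIntegrable (fun r => (1 - α) * (u - r) ^ (α - 2)) volume 0 s := by
    refine ContinuousOn.intervalIntegrable (continuousOn_const.mul ?_)
    rw [uIcc_of_le hs]
    exact (continuousOn_const.sub continuousOn_id).rpow_const fun r hr =>
      Or.inl (hpos r hr).ne'
  have hsawtooth : ∫ r in (0 : ℝ)..s, (u - r) ^ (α - 1) * ((⌈c * r⌉ : ℝ) - c * r - 1 / 2)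
      = ∫ r in (0 : ℝ)..s, (u - r) ^ (α - 1) * sawtooth (c * r) :=
    intervalIntegral.integral_congr_ae <|
      (ae_ceil_sub_self_sub_half_eq_sawtooth hc.ne').mono fun r hr _ => by rw [hr]
  have hbound := abs_integral_mul_sawtooth_le hs hc hkernel hkernel'
    (fun r hr => mul_nonneg (sub_nonneg.2 hα) (Real.rpow_nonneg (hpos r hr).le _))
    (Real.rpow_nonneg (hpos 0 ⟨le_rfl, hs⟩).le _)
  rw [gn, hsawtooth, abs_mul, abs_of_nonneg (Real.rpow_nonneg hc.le α)]
  calc c ^ α * |∫ r in (0 : ℝ)..s, (u - r) ^ (α - 1) * sawtooth (c * r)|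
      ≤ c ^ α * ((u - s) ^ (α - 1) / (8 * c)) :=
        mul_le_mul_of_nonneg_left hbound (Real.rpow_nonneg hc.le α)
    _ = (c * (u - s)) ^ (α - 1) / 8 := by
        rw [Real.mul_rpow hc.le (sub_nonneg.2 hsu.le), Real.rpow_sub_one hc.ne']
        field_simp

theorem tendsto_integral_gn_mul_ceil_sub_self_sub_half {α s t : ℝ} (hα : α ∈ Ioo 0 1)
    (hs : 0 ≤ s) (hst : s ≤ t) :
    Tendsto (fun c : ℝ => ∫ u in s..t, gn α c s u * ((⌈c * u⌉ : ℝ) - c * u - 1 / 2))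
      atTop (𝓝 0) := by
  set J := ∫ u in s..t, (u - s) ^ (α - 1)
  have hJ_int : IntervalIntegrable (fun u => (u - s) ^ (α - 1)) volume s t := by
    simpa using (intervalIntegral.intervalIntegrable_rpow' (a := 0) (b := t - s)
      (show -1 < α - 1 by linarith [hα.1])).comp_sub_right s
  have hJ : 0 ≤ J :=
    intervalIntegral.integral_nonneg hst fun u hu => Real.rpow_nonneg (sub_nonneg.2 hu.1) _
  have hdecay : Tendsto (fun c : ℝ => c ^ (α - 1) * J / 16) atTop (𝓝 0) := by
    simpa [neg_sub] using ((tendsto_rpow_neg_atTop (sub_pos.2 hα.2)).mul_const J).div_const 16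
  refine squeeze_zero_norm' ?_ hdecay
  filter_upwards [eventually_gt_atTop 0] with c hc
  have hpointwise : ∀ u ∈ Ioc s t, ‖gn α c s u * ((⌈c * u⌉ : ℝ) - c * u - 1 / 2)‖
      ≤ c ^ (α - 1) * (u - s) ^ (α - 1) / 16 := fun u hu => by
    have hgn := abs_gn_le hα.2.le hc hs hu.1
    rw [Real.mul_rpow hc.le (sub_nonneg.2 hu.1.le)] at hgn
    rw [Real.norm_eq_abs, abs_mul]
    nlinarith [abs_nonneg (gn α c s u), abs_ceil_sub_self_sub_half_le (c * u),
      abs_nonneg ((⌈c * u⌉ : ℝ) - c * u - 1 / 2)]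
  calc _ ≤ |∫ u in s..t, c ^ (α - 1) * (u - s) ^ (α - 1) / 16| :=
        intervalIntegral.norm_integral_le_abs_of_norm_le
          ((ae_restrict_mem measurableSet_uIoc).mono fun u hu =>
            hpointwise u (uIoc_of_le hst ▸ hu))
          ((hJ_int.const_mul _).div_const _)
    _ = c ^ (α - 1) * J / 16 := by
        rw [intervalIntegral.integral_div, intervalIntegral.integral_const_mul,
          abs_of_nonneg (by positivity)]

theorem gn_bound_and_integral_tendsto_zero_general (α : ℝ) (hα : α ∈ Set.Ioo (0 : ℝ) 1)
    (s t : ℝ) (hs : 0 ≤ s) (hst : s ≤ t) :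
    (∃ C : ℝ, ∀ n : ℕ, 1 ≤ n → ∀ u ∈ Set.Ioc s 1,
        (∀ k : ℕ, (n : ℝ) * u ≠ k) → (∀ k : ℕ, (n : ℝ) * s ≠ k) →
        |(n : ℝ) ^ α *
            ∫ r in (0 : ℝ)..s, (u - r) ^ (α - 1) * ((⌈(n : ℝ) * r⌉ : ℝ) - n * r - 1 / 2)|
          ≤ C * (((n : ℝ) * u) ^ (α - 1) + ((n : ℝ) * u - (n : ℝ) * s) ^ (α - 1))) ∧
    Tendsto (fun n : ℕ =>
        ∫ u in s..t,
          ((n : ℝ) ^ α *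
            ∫ r in (0 : ℝ)..s, (u - r) ^ (α - 1) * ((⌈(n : ℝ) * r⌉ : ℝ) - n * r - 1 / 2))
          * ((⌈(n : ℝ) * u⌉ : ℝ) - n * u - 1 / 2))
      atTop (nhds 0) := by
  refine ⟨⟨1 / 8, fun n hn u hu _ _ => ?_⟩,
    (tendsto_integral_gn_mul_ceil_sub_self_sub_half hα hs hst).comp tendsto_natCast_atTop_atTop⟩
  have hn : (0 : ℝ) < n := by exact_mod_cast hn
  have hnu : 0 ≤ ((n : ℝ) * u) ^ (α - 1) :=
    Real.rpow_nonneg (mul_nonneg hn.le (hs.trans hu.1.le)) _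
  calc _ ≤ ((n : ℝ) * (u - s)) ^ (α - 1) / 8 := abs_gn_le hα.2.le hn hs hu.1
    _ ≤ _ := by rw [mul_sub]; linarith

/-- With `g_n(u,s) = n^α ∫₀ˢ (u-r)^{α-1}(⌈nr⌉ - nr - 1/2) dr`, there is a
constant `C` (depending only on `α`) such that
`|g_n(u,s)| ≤ C((nu)^{α-1} + (nu - ns)^{α-1})` whenever `u ∈ (s,1]` and
`nu, ns ∉ ℕ`; consequently `∫ₛᵗ g_n(u,s)(⌈nu⌉ - nu - 1/2) du → 0`. -/
theorem gn_bound_and_integral_tendsto_zero (α : ℝ) (hα : α ∈ Set.Ioo (0 : ℝ) 1)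
    (s t : ℝ) (hs : 0 ≤ s) (hst : s ≤ t) (ht : t ≤ 1) :
    (∃ C : ℝ, ∀ n : ℕ, 1 ≤ n → ∀ u ∈ Set.Ioc s 1,
        (∀ k : ℕ, (n : ℝ) * u ≠ k) → (∀ k : ℕ, (n : ℝ) * s ≠ k) →
        |(n : ℝ) ^ α *
            ∫ r in (0 : ℝ)..s, (u - r) ^ (α - 1) * ((⌈(n : ℝ) * r⌉ : ℝ) - n * r - 1 / 2)|
          ≤ C * (((n : ℝ) * u) ^ (α - 1) + ((n : ℝ) * u - (n : ℝ) * s) ^ (α - 1))) ∧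
    Tendsto (fun n : ℕ =>
        ∫ u in s..t,
          ((n : ℝ) ^ α *
            ∫ r in (0 : ℝ)..s, (u - r) ^ (α - 1) * ((⌈(n : ℝ) * r⌉ : ℝ) - n * r - 1 / 2))
          * ((⌈(n : ℝ) * u⌉ : ℝ) - n * u - 1 / 2))
      atTop (nhds 0) :=
  gn_bound_and_integral_tendsto_zero_general α hα s t hs hst
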